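/- For a process p and formula φ ∈ sHML, p satisfies φ under branching-time semantics if and only if every finfinite trace produced by p satisfies φ under finfinite semantics. -/

import Mathlib

inductive HFrm (Act : Type) : Type
  | tt : HFrm Act
  | ff : HFrm Act
  | orf : HFrm Act → HFrm Act → HFrm Act
  | andf : HFrm Act → HFrm Act → HFrm Act
  | dia : Set Act → HFrm Act → HFrm Act
  | box : Set Act → HFrm Act → HFrm Act
  | fmin : ℕ → HFrm Act → HFrm Act
  | fmax : ℕ → HFrm Act → HFrm Act
  | var : ℕ → HFrm Act

/-- Free recursion variables of a formula. -/
def fv {Act : Type} : HFrm Act → Finset ℕ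
  | HFrm.tt => ∅
  | HFrm.ff => ∅
  | HFrm.orf φ ψ => fv φ ∪ fv ψ
  | HFrm.andf φ ψ => fv φ ∪ fv ψ
  | HFrm.dia _ φ => fv φ
  | HFrm.box _ φ => fv φ
  | HFrm.fmin X φ => fv φ \ {X}
  | HFrm.fmax X φ => fv φ \ {X}
  | HFrm.var X => {X}

/-- Finfinite traces: finite or infinite sequences of actions. -/
abbrev FTrc (Act : Type) := List Act ⊕ (ℕ → Act)

/-- Prepending an action to a finfinite trace. -/
def fcons {Act : Type} (a : Act) : FTrc Act → FTrc Act
  | Sum.inl s => Sum.inl (a :: s)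
  | Sum.inr t => Sum.inr (fun i => match i with | 0 => a | j + 1 => t j)

/-- Finfinite linear-time semantics of recHML. -/
def fsem {Act : Type} : HFrm Act → (ℕ → Set (FTrc Act)) → Set (FTrc Act)
  | HFrm.tt, _ => Set.univ
  | HFrm.ff, _ => ∅
  | HFrm.orf φ ψ, σ => fsem φ σ ∪ fsem ψ σ
  | HFrm.andf φ ψ, σ => fsem φ σ ∩ fsem ψ σ
  | HFrm.dia A φ, σ => {g | ∃ a ∈ A, ∃ g', g = fcons a g' ∧ g' ∈ fsem φ σ}
  | HFrm.box A φ, σ => {g | ∀ a ∈ A, ∀ g', g = fcons a g' → g' ∈ fsem φ σ}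
  | HFrm.fmin X φ, σ => ⋂₀ {T | fsem φ (Function.update σ X T) ⊆ T}
  | HFrm.fmax X φ, σ => ⋃₀ {T | T ⊆ fsem φ (Function.update σ X T)}
  | HFrm.var X, σ => σ X

/-- Composition of single transitions along an explicit trace
(a finite sequence of actions and τ's). -/
inductive ESteps {Act S : Type} (tr : S → Option Act → S → Prop) :
    S → List (Option Act) → S → Prop
  | refl (s : S) : ESteps tr s [] s
  | step {s s' s'' : S} {μ : Option Act} {l : List (Option Act)} :
      tr s μ s' → ESteps tr s' l s'' → ESteps tr s (μ :: l) s''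

/-- Weak transition sequences: consume the external actions of a finite trace,
absorbing τ-steps. -/
inductive WSteps {Act S : Type} (tr : S → Option Act → S → Prop) :
    S → List Act → S → Prop
  | refl (s : S) : WSteps tr s [] s
  | tau {s s' s'' : S} {l : List Act} :
      tr s none s' → WSteps tr s' l s'' → WSteps tr s l s''
  | act {s s' s'' : S} {a : Act} {l : List Act} :
      tr s (some a) s' → WSteps tr s' l s'' → WSteps tr s (a :: l) s''

/-- Branching-time semantics of recHML over processes of an LTS,
with weak modalities. -/
def bsem {Act Proc : Type} (tr : Proc → Option Act → Proc → Prop) :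
    HFrm Act → (ℕ → Set Proc) → Set Proc
  | HFrm.tt, _ => Set.univ
  | HFrm.ff, _ => ∅
  | HFrm.orf φ ψ, ρ => bsem tr φ ρ ∪ bsem tr ψ ρ
  | HFrm.andf φ ψ, ρ => bsem tr φ ρ ∩ bsem tr ψ ρ
  | HFrm.dia A φ, ρ => {p | ∃ a ∈ A, ∃ q, WSteps tr p [a] q ∧ q ∈ bsem tr φ ρ}
  | HFrm.box A φ, ρ => {p | ∀ a ∈ A, ∀ q, WSteps tr p [a] q → q ∈ bsem tr φ ρ}
  | HFrm.fmin X φ, ρ => ⋂₀ {P | bsem tr φ (Function.update ρ X P) ⊆ P}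
  | HFrm.fmax X φ, ρ => ⋃₀ {P | P ⊆ bsem tr φ (Function.update ρ X P)}
  | HFrm.var X, ρ => ρ X

/-- `Produces tr p g`: the process `p` produces the finfinite trace `g`
(via weak transitions). -/
def Produces {Act Proc : Type} (tr : Proc → Option Act → Proc → Prop)
    (p : Proc) : FTrc Act → Prop
  | Sum.inl s => ∃ q, WSteps tr p s q
  | Sum.inr t => ∃ f : ℕ → Proc, f 0 = p ∧ ∀ i : ℕ, WSteps tr (f i) [t i] (f (i + 1))

/-- The sHML fragment: tt, ff, [A]φ, conjunction, greatest fixpoints, variables. -/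
inductive InSHML {Act : Type} : HFrm Act → Prop
  | tt : InSHML HFrm.tt
  | ff : InSHML HFrm.ff
  | box (A : Set Act) {φ : HFrm Act} : InSHML φ → InSHML (HFrm.box A φ)
  | andf {φ ψ : HFrm Act} : InSHML φ → InSHML ψ → InSHML (HFrm.andf φ ψ)
  | fmax (X : ℕ) {φ : HFrm Act} : InSHML φ → InSHML (HFrm.fmax X φ)
  | var (X : ℕ) : InSHML (HFrm.var X)

/-!
Let `allProducedIn T` be the set of processes all of whose produced traces lie in the trace set `T`.
For sHML formulas the branching-time meaning is `allProducedIn` of the trace meaning, checked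
construct by construct: a trace of `p` beginning with `a` is exactly a weak `a`-step of `p` followed
by a trace of its target, which handles boxes; `ff` is handled because every process produces the
empty trace; and for greatest fixpoints, the traces produced by an invariant set of processes form
a trace-level post-fixpoint, while the processes all of whose traces satisfy the trace-level
greatest fixpoint form a process-level one.
-/

open Function

namespace WSteps

variable {Act S : Type} {tr : S → Option Act → S → Prop}

theorem append {p q r : S} {l l' : List Act} (h : WSteps tr p l q) (h' : WSteps tr q l' r) :
    WSteps tr p (l ++ l') r := by
  induction h with
  | refl => exact h'
  | tau ht _ ih => exact .tau ht (ih h')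
  | act ha _ ih => exact .act ha (ih h')

theorem cons_iff {p q : S} {a : Act} {l : List Act} :
    WSteps tr p (a :: l) q ↔ ∃ m, WSteps tr p [a] m ∧ WSteps tr m l q := by
  refine ⟨fun h => ?_, fun ⟨_, h₁, h₂⟩ => h₁.append h₂⟩
  generalize hl : a :: l = l₀ at h
  induction h with
  | refl => cases hl
  | tau ht _ ih =>
    obtain ⟨m, h₁, h₂⟩ := ih hl
    exact ⟨m, .tau ht h₁, h₂⟩
  | act ha h _ =>
    cases hl
    exact ⟨_, .act ha (.refl _), h⟩

end WSteps

section

variable {Act Proc : Type}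

theorem fsem_monotone : ∀ φ : HFrm Act, Monotone (fsem φ)
  | .tt, _, _, _ => le_rfl
  | .ff, _, _, _ => le_rfl
  | .orf φ ψ, _, _, h => Set.union_subset_union (fsem_monotone φ h) (fsem_monotone ψ h)
  | .andf φ ψ, _, _, h => Set.inter_subset_inter (fsem_monotone φ h) (fsem_monotone ψ h)
  | .dia _ φ, _, _, h => fun _ ⟨a, ha, g', hg, hg'⟩ =>
      ⟨a, ha, g', hg, fsem_monotone φ h hg'⟩
  | .box _ φ, _, _, h => fun _ hg a ha g' hg' => fsem_monotone φ h (hg a ha g' hg')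
  | .fmin _ φ, _, _, h => Set.sInter_subset_sInter fun _ hT =>
      (fsem_monotone φ (update_le_update_iff.2 ⟨le_rfl, fun j _ => h j⟩)).trans hT
  | .fmax _ φ, _, _, h => Set.sUnion_subset_sUnion fun _ hT =>
      hT.trans (fsem_monotone φ (update_le_update_iff.2 ⟨le_rfl, fun j _ => h j⟩))
  | .var X, _, _, h => h X

theorem fsem_fmax_subset_unfold (X : ℕ) (φ : HFrm Act) (σ : ℕ → Set (FTrc Act)) :
    fsem (.fmax X φ) σ ⊆ fsem φ (update σ X (fsem (.fmax X φ) σ)) := by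
  rintro g ⟨T, hT, hgT⟩
  exact fsem_monotone φ (update_le_update_iff'.2 (Set.subset_sUnion_of_mem hT)) (hT hgT)

theorem forall_mem_fv_update {α β : Type} {R : α → β → Prop} {X : ℕ} {φ : HFrm Act}
    {ρ : ℕ → α} {σ : ℕ → β} {a : α} {b : β}
    (h : ∀ Y ∈ fv (.fmax X φ), R (ρ Y) (σ Y)) (hab : R a b) :
    ∀ Y ∈ fv φ, R (update ρ X a Y) (update σ X b Y) := by
  intro Y hY
  rcases eq_or_ne Y X with rfl | hne
  · simpa only [update_self] using hab
  · rw [update_of_ne hne, update_of_ne hne]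
    exact h Y (Finset.mem_sdiff.2 ⟨hY, Finset.notMem_singleton.2 hne⟩)

variable (tr : Proc → Option Act → Proc → Prop)

def allProducedIn (T : Set (FTrc Act)) : Set Proc :=
  {p | ∀ g, Produces tr p g → g ∈ T}

theorem produces_fcons_iff {p : Proc} {a : Act} {g : FTrc Act} :
    Produces tr p (fcons a g) ↔ ∃ q, WSteps tr p [a] q ∧ Produces tr q g := by
  cases g with
  | inl s =>
    simp only [fcons, Produces]
    constructor
    · rintro ⟨r, h⟩
      obtain ⟨q, hq, hr⟩ := WSteps.cons_iff.1 h
      exact ⟨q, hq, r, hr⟩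
    · rintro ⟨q, hq, r, hr⟩
      exact ⟨r, WSteps.cons_iff.2 ⟨q, hq, hr⟩⟩
  | inr t =>
    constructor
    · rintro ⟨f, rfl, hf⟩
      exact ⟨f 1, hf 0, fun i => f (i + 1), rfl, fun i => hf (i + 1)⟩
    · rintro ⟨q, hq, f, rfl, hf⟩
      refine ⟨fun | 0 => p | i + 1 => f i, rfl, ?_⟩
      rintro (_ | i)
      exacts [hq, hf i]

theorem bsem_subset_allProducedIn {φ : HFrm Act} (hφ : InSHML φ) {ρ : ℕ → Set Proc}
    {σ : ℕ → Set (FTrc Act)} (henv : ∀ X ∈ fv φ, ρ X ⊆ allProducedIn tr (σ X)) :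
    bsem tr φ ρ ⊆ allProducedIn tr (fsem φ σ) := by
  induction hφ generalizing ρ σ with
  | tt => exact fun _ _ g _ => Set.mem_univ g
  | ff => exact fun _ hp => hp.elim
  | box _ _ ih =>
    rintro p hp _ hg a ha g rfl
    obtain ⟨q, hpq, hq⟩ := (produces_fcons_iff tr).1 hg
    exact ih henv (hp a ha q hpq) g hq
  | andf _ _ ih₁ ih₂ =>
    exact fun p hp g hg => ⟨ih₁ (fun X hX => henv X (Finset.mem_union_left _ hX)) hp.1 g hg,
      ih₂ (fun X hX => henv X (Finset.mem_union_right _ hX)) hp.2 g hg⟩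
  | fmax X _ ih =>
    rintro p ⟨P, hP, hpP⟩ g hg
    let T := {g | ∃ q ∈ P, Produces tr q g}
    have hPT : P ⊆ allProducedIn tr T := fun q hq g hg => ⟨q, hq, hg⟩
    refine ⟨T, ?_, p, hpP, hg⟩
    rintro g' ⟨q, hqP, hq⟩
    exact ih (forall_mem_fv_update (R := fun P T => P ⊆ allProducedIn tr T) henv hPT)
      (hP hqP) g' hq
  | var X => exact henv X (Finset.mem_singleton_self X)

theorem allProducedIn_subset_bsem {φ : HFrm Act} (hφ : InSHML φ) {ρ : ℕ → Set Proc}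
    {σ : ℕ → Set (FTrc Act)} (henv : ∀ X ∈ fv φ, allProducedIn tr (σ X) ⊆ ρ X) :
    allProducedIn tr (fsem φ σ) ⊆ bsem tr φ ρ := by
  induction hφ generalizing ρ σ with
  | tt => exact fun p _ => Set.mem_univ p
  | ff => exact fun p hp => hp (.inl []) ⟨p, .refl p⟩
  | box _ _ ih =>
    intro p hp a ha q hpq
    exact ih henv fun g hg => hp _ ((produces_fcons_iff tr).2 ⟨q, hpq, hg⟩) a ha g rfl
  | andf _ _ ih₁ ih₂ =>
    exact fun p hp =>
      ⟨ih₁ (fun X hX => henv X (Finset.mem_union_left _ hX)) fun g hg => (hp g hg).1,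
        ih₂ (fun X hX => henv X (Finset.mem_union_right _ hX)) fun g hg => (hp g hg).2⟩
  | @fmax X φ _ ih =>
    intro p hp
    refine ⟨allProducedIn tr (fsem (.fmax X φ) σ), fun q hq => ?_, hp⟩
    exact ih (forall_mem_fv_update (R := fun P T => allProducedIn tr T ⊆ P) henv subset_rfl)
      fun g hg => fsem_fmax_subset_unfold X φ σ (hq g hg)
  | var X => exact henv X (Finset.mem_singleton_self X)

end

/-- For a process `p` and a closed sHML formula `φ`: `p` satisfies `φ` under the
branching-time semantics iff every finfinite trace produced by `p` satisfies `φ`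
under the finfinite semantics. -/
theorem shml_branching_iff_all_produced_traces {Act Proc : Type}
    (tr : Proc → Option Act → Proc → Prop) (φ : HFrm Act)
    (hshml : InSHML φ) (hcl : fv φ = ∅)
    (p : Proc) (ρ : ℕ → Set Proc) (σ : ℕ → Set (FTrc Act)) :
    p ∈ bsem tr φ ρ ↔ ∀ g : FTrc Act, Produces tr p g → g ∈ fsem φ σ := by
  exact ⟨fun hp => bsem_subset_allProducedIn tr hshml (by simp [hcl]) hp,
    fun hp => allProducedIn_subset_bsem tr hshml (by simp [hcl]) hp⟩
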